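/- Let n ≥ 3 be odd, k ≥ 1, and 1 ≤ c ≤ k. The unicyclic graph G_{n,k,-c}, consisting of an odd cycle on vertices a_1,...,a_n with k pendant vertices attached to each of a_1,...,a_{n-1} and k−c pendant vertices attached to a_n, is super edge-magic total and sm(G_{n,k,-c}) = 2n(k+1) − 2c + (n+3)/2. -/

import Mathlib

/-- A super edge-magic total labeling of a graph `G` with `p = Fintype.card V` vertices and
`q = G.edgeSet.ncard` edges: `fv` maps the vertices bijectively onto `{1,…,p}`, `fe` maps the
edges bijectively onto `{p+1,…,p+q}` (so together they form a bijection of `V ∪ E` onto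
`{1,…,p+q}` with `f(V) = {1,…,p}`), and every edge `uv` satisfies `f(u)+f(v)+f(uv) = c`. -/
def IsSEMT {V : Type*} [Fintype V] (G : SimpleGraph V)
    (fv : V → ℕ) (fe : Sym2 V → ℕ) (c : ℕ) : Prop :=
  Set.BijOn fv Set.univ (Set.Icc 1 (Fintype.card V)) ∧
  Set.BijOn fe G.edgeSet
    (Set.Icc (Fintype.card V + 1) (Fintype.card V + G.edgeSet.ncard)) ∧
  ∀ u v, G.Adj u v → fv u + fv v + fe s(u, v) = c

/-- The unicyclic graph `G(n; k₁, …, kₙ)`: a cycle on `Fin n` (vertex `i` adjacent to `i+1 mod n`)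
with `k i` pendant vertices attached to the cycle vertex `i`. -/
def pendantCycle (n : ℕ) (k : Fin n → ℕ) :
    SimpleGraph (Fin n ⊕ Σ i : Fin n, Fin (k i)) :=
  SimpleGraph.fromRel (fun a b =>
    (∃ i j : Fin n, a = Sum.inl i ∧ b = Sum.inl j ∧ (i.val + 1) % n = j.val) ∨
    (∃ (i : Fin n) (j : Fin (k i)), a = Sum.inr ⟨i, j⟩ ∧ b = Sum.inl i))

/-!
Index the cycle by `i = 0, …, n-1`, so that the paper's `aₙ` (with `k - c` pendants) is `i = n-1`.
Label cycle vertex `i` by `i/2 + 1` for even `i` and `(n+i)/2 + 1` for odd `i`: with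
`h = (n+1)/2` the cycle edges get the consecutive sums `h+1, …, h+n`. The pendants are labelled in
layers above `n`, a pendant of `i` taking its position within a layer from the label of `i + 1`;
then each pendant edge sum lies in the matching layer above `h + n`, so the edge sums fill the
interval `h+1, …, h+p`, and the edge labels `C - (f u + f v)` with `C = 2p + (n+3)/2` fill
`p+1, …, 2p`.

Conversely, summing `f u + f v + f(uv) = C` over the `q = p` edges gives
`p C = p (2p+1) + (k+1) X - c y`, where `X` is the sum of the cycle labels and `y` the label of
vertex `n-1`. The cycle labels are `n` distinct positive integers, so `X ≥ n(n+1)/2` and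
`X - y ≥ (n-1)n/2`, which forces `C ≥ 2p + (n+3)/2`.
-/

open Function

section Arithmetic

lemma eq_and_eq_of_add_mul_eq {w u u' j j' : ℕ} (hu : u < w) (hu' : u' < w)
    (h : u + j * w = u' + j' * w) : u = u' ∧ j = j' := by
  have hw : 0 < w := by omega
  have hdiv : ∀ {u j}, u < w → (u + j * w) / w = j := fun hu => by
    rw [Nat.add_mul_div_right _ _ hw, Nat.div_eq_of_lt hu, zero_add]
  have hj : j = j' := by rw [← hdiv (j := j) hu, h, hdiv hu']
  subst hj
  exact ⟨by omega, rfl⟩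

lemma add_mul_le_mul {w u j J : ℕ} (hu : u ≤ w) (hj : j < J) : u + j * w ≤ J * w :=
  calc u + j * w ≤ (j + 1) * w := by rw [add_mul, one_mul, add_comm]; omega
    _ ≤ J * w := Nat.mul_le_mul_right w hj

lemma two_mul_sum_Icc (a b : ℕ) :
    2 * ∑ i ∈ Finset.Icc (a + 1) (a + b), i = b * (2 * a + b + 1) := by
  induction b with
  | zero => simp
  | succ b ih =>
    rw [← add_assoc, Finset.sum_Icc_succ_top (by omega), mul_add, ih]
    ring

lemma card_mul_card_add_one_le_two_mul_sum (s : Finset ℕ) (h₀ : 0 ∉ s) :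
    s.card * (s.card + 1) ≤ 2 * ∑ x ∈ s, x := by
  induction s using Finset.induction_on_max with
  | empty => simp
  | insert a s hlt ih =>
    have has : a ∉ s := fun h => lt_irrefl a (hlt a h)
    have hcard : s.card + 1 ≤ a := by
      have hsub : s ⊆ Finset.Ioo 0 a := fun x hx => Finset.mem_Ioo.2
        ⟨Nat.pos_of_ne_zero fun h => h₀ (h ▸ Finset.mem_insert_of_mem hx), hlt x hx⟩
      have := Finset.card_le_card hsub
      rw [Nat.card_Ioo] at this
      have ha : a ≠ 0 := fun h => h₀ (h ▸ Finset.mem_insert_self a s)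
      omega
    rw [Finset.card_insert_of_notMem has, Finset.sum_insert has]
    have := ih fun h => h₀ (Finset.mem_insert_of_mem h)
    nlinarith

end Arithmetic

section Labeling

variable {V : Type*}

def edgeSum (f : V → ℕ) : Sym2 V → ℕ :=
  Sym2.lift ⟨fun u v => f u + f v, fun _ _ => add_comm _ _⟩

@[simp]
lemma edgeSum_mk (f : V → ℕ) (u v : V) : edgeSum f s(u, v) = f u + f v := rfl

variable [Fintype V]

lemma bijOn_Icc_of_injective {ι : Type*} [Fintype ι] {f : ι → ℕ} {a b : ℕ} (hf : Injective f)
    (hmem : ∀ x, f x ∈ Set.Icc a b) (hcard : Fintype.card ι = b + 1 - a) :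
    Set.BijOn f Set.univ (Set.Icc a b) := by
  refine ⟨fun x _ => hmem x, hf.injOn, fun y hy => ?_⟩
  have hsub : Finset.univ.image f ⊆ Finset.Icc a b := fun y hy => by
    obtain ⟨x, -, rfl⟩ := Finset.mem_image.1 hy
    simpa using hmem x
  have himage := Finset.eq_of_subset_of_card_le hsub (by
    rw [Nat.card_Icc, Finset.card_image_of_injective _ hf, Finset.card_univ, hcard])
  have : y ∈ Finset.univ.image f := himage ▸ Finset.mem_Icc.2 hy
  simpa using this

lemma bijOn_tsub_Icc {C a b c d : ℕ} (had : a + d = C) (hbc : b + c = C) :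
    Set.BijOn (C - ·) (Set.Icc a b) (Set.Icc c d) := by
  refine ⟨fun x hx => ?_, fun x hx y hy h => ?_, fun y hy => ⟨C - y, ?_, ?_⟩⟩ <;>
    simp only [Set.mem_Icc] at * <;> omega

theorem isSEMT_of_bijOn_edgeSum {G : SimpleGraph V} {f : V → ℕ} {s : ℕ}
    (hf : Set.BijOn f Set.univ (Set.Icc 1 (Fintype.card V)))
    (hs : Set.BijOn (edgeSum f) G.edgeSet (Set.Icc (s + 1) (s + G.edgeSet.ncard))) :
    IsSEMT G f (fun e => Fintype.card V + G.edgeSet.ncard + s + 1 - edgeSum f e)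
      (Fintype.card V + G.edgeSet.ncard + s + 1) := by
  refine ⟨hf, ?_, fun u v huv => ?_⟩
  · exact (bijOn_tsub_Icc (by omega) (by omega)).comp hs
  · have := hs.mapsTo (G.mem_edgeSet.2 huv)
    simp only [Set.mem_Icc, edgeSum_mk] at this ⊢
    omega

lemma sum_eq_sum_Icc_of_bijOn {ι : Type*} [Fintype ι] {g : ι → ℕ} {a b : ℕ}
    (h : Set.BijOn g Set.univ (Set.Icc a b)) : ∑ x, g x = ∑ i ∈ Finset.Icc a b, i :=
  Finset.sum_nbij g (fun x _ => by simpa using h.mapsTo (Set.mem_univ x))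
    (by simpa using h.injOn) (by simpa using h.surjOn) (fun _ _ => rfl)

variable {G : SimpleGraph V} {fv : V → ℕ} {fe : Sym2 V → ℕ} {C : ℕ}

lemma IsSEMT.sum_vertexLabel (h : IsSEMT G fv fe C) :
    ∑ v, fv v = ∑ i ∈ Finset.Icc 1 (Fintype.card V), i :=
  sum_eq_sum_Icc_of_bijOn h.1

lemma IsSEMT.sum_edgeLabel_comp {ι : Type*} [Fintype ι] {e : ι → Sym2 V} (he : Injective e)
    (hrange : Set.range e = G.edgeSet) (h : IsSEMT G fv fe C) :
    ∑ x, fe (e x) = ∑ i ∈ Finset.Icc (Fintype.card V + 1)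
      (Fintype.card V + G.edgeSet.ncard), i :=
  sum_eq_sum_Icc_of_bijOn <| (Set.bijOn_comp_iff he.injOn).2 <| by
    rw [Set.image_univ, hrange]; exact h.2.1

lemma IsSEMT.edgeSum_add (h : IsSEMT G fv fe C) {e : Sym2 V} (he : e ∈ G.edgeSet) :
    edgeSum fv e + fe e = C := by
  induction e using Sym2.ind with
  | _ u v => exact h.2.2 u v he

lemma IsSEMT.card_mul_le_two_mul_sum (h : IsSEMT G fv fe C) {ι : Type*} {g : ι → V}
    (hg : Injective g) (s : Finset ι) : s.card * (s.card + 1) ≤ 2 * ∑ x ∈ s, fv (g x) := by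
  classical
  have hinj : Set.InjOn (fv ∘ g) s := fun x _ y _ hxy => hg (h.1.injOn trivial trivial hxy)
  have hpos : 0 ∉ s.image (fv ∘ g) := by
    simp only [Finset.mem_image, comp_apply, not_exists, not_and]
    intro x _ hx
    have := h.1.mapsTo (Set.mem_univ (g x))
    simp only [Set.mem_Icc] at this
    omega
  have := card_mul_card_add_one_le_two_mul_sum (s.image (fv ∘ g)) hpos
  rwa [Finset.card_image_of_injOn hinj, Finset.sum_image hinj] at this

end Labeling

namespace PendantCycle

section Graph

variable {n : ℕ} [NeZero n] {K : Fin n → ℕ}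

lemma val_add_one_mod (hn : 1 < n) (i : Fin n) : (i + 1).val = (i.val + 1) % n := by
  rw [Fin.val_add, Fin.val_one', Nat.mod_eq_of_lt hn]

lemma add_one_ne_self (hn : 1 < n) (i : Fin n) : i + 1 ≠ i := by
  refine add_ne_left.2 fun h => ?_
  have := congrArg Fin.val h
  rw [Fin.val_one', Nat.mod_eq_of_lt hn, Fin.val_zero] at this
  exact one_ne_zero this

lemma add_one_add_one_ne_self (hn : 2 < n) (i : Fin n) : i + 1 + 1 ≠ i := by
  rw [add_assoc]
  refine add_ne_left.2 fun h => ?_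
  have := congrArg Fin.val h
  rw [Fin.val_add, Fin.val_one', Nat.mod_eq_of_lt (by omega : 1 < n),
    Nat.mod_eq_of_lt (by omega : 1 + 1 < n), Fin.val_zero] at this
  omega

lemma pos_val_add_one (hn : 1 < n) {i : Fin n} (hi : i.val ≠ n - 1) : 0 < (i + 1).val := by
  rw [Fin.val_add_one_of_lt' (by omega)]
  omega

-- Every vertex owns one edge (the cycle edge to its successor, or its pendant edge); this is a
-- bijection from the vertices onto the edges.
variable (K) in
def ownedEdge : Fin n ⊕ (Σ i, Fin (K i)) → Sym2 (Fin n ⊕ Σ i, Fin (K i))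
  | .inl i => s(.inl i, .inl (i + 1))
  | .inr z => s(.inr z, .inl z.1)

lemma ownedEdge_mem_edgeSet (hn : 1 < n) (x : Fin n ⊕ Σ i, Fin (K i)) :
    ownedEdge K x ∈ (pendantCycle n K).edgeSet := by
  cases x with
  | inl i =>
    show (pendantCycle n K).Adj (.inl i) (.inl (i + 1))
    rw [pendantCycle, SimpleGraph.fromRel_adj]
    exact ⟨by simpa [eq_comm] using add_one_ne_self hn i,
      Or.inl (Or.inl ⟨i, i + 1, rfl, rfl, (val_add_one_mod hn i).symm⟩)⟩
  | inr z =>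
    show (pendantCycle n K).Adj (.inr z) (.inl z.1)
    rw [pendantCycle, SimpleGraph.fromRel_adj]
    exact ⟨Sum.inr_ne_inl, Or.inl (Or.inr ⟨z.1, z.2, rfl, rfl⟩)⟩

lemma range_ownedEdge (hn : 1 < n) : Set.range (ownedEdge K) = (pendantCycle n K).edgeSet := by
  refine Set.Subset.antisymm (Set.range_subset_iff.2 (ownedEdge_mem_edgeSet hn)) fun e he => ?_
  induction e using Sym2.ind with
  | _ u v =>
    have hsucc : ∀ i j : Fin n, (i.val + 1) % n = j.val → j = i + 1 := fun i j h =>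
      Fin.ext (by rw [val_add_one_mod hn, h])
    rw [SimpleGraph.mem_edgeSet, pendantCycle, SimpleGraph.fromRel_adj] at he
    obtain ⟨-, (⟨i, j, rfl, rfl, h⟩ | ⟨i, j, rfl, rfl⟩) |
      (⟨i, j, rfl, rfl, h⟩ | ⟨i, j, rfl, rfl⟩)⟩ := he
    · exact ⟨.inl i, by rw [hsucc i j h]; rfl⟩
    · exact ⟨.inr ⟨i, j⟩, rfl⟩
    · exact ⟨.inl i, by rw [hsucc i j h]; exact Sym2.eq_swap⟩
    · exact ⟨.inr ⟨i, j⟩, Sym2.eq_swap⟩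

lemma ownedEdge_injective (hn : 2 < n) : Injective (ownedEdge K) := by
  rintro (i | z) (i' | z') h
  · rcases Sym2.eq_iff.1 h with ⟨h₁, -⟩ | ⟨h₁, h₂⟩
    · exact congrArg _ (Sum.inl_injective h₁)
    · obtain rfl := Sum.inl_injective h₁
      exact absurd (Sum.inl_injective h₂) (add_one_add_one_ne_self hn i')
  · simp [ownedEdge] at h
  · simp [ownedEdge] at h
  · rcases Sym2.eq_iff.1 h with ⟨h₁, -⟩ | ⟨h₁, -⟩
    · exact congrArg _ (Sum.inr_injective h₁)
    · exact absurd h₁ Sum.inr_ne_inl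

lemma ncard_edgeSet (hn : 2 < n) :
    (pendantCycle n K).edgeSet.ncard = Fintype.card (Fin n ⊕ Σ i, Fin (K i)) := by
  rw [← range_ownedEdge (by omega), Set.ncard_range_of_injective (ownedEdge_injective hn),
    Nat.card_eq_fintype_card]

lemma sum_edgeSum_ownedEdge (f : Fin n ⊕ (Σ i, Fin (K i)) → ℕ) :
    ∑ x, edgeSum f (ownedEdge K x) = ∑ v, f v + ∑ i, (K i + 1) * f (.inl i) := by
  have hshift : ∑ i : Fin n, f (.inl (i + 1)) = ∑ i, f (.inl i) :=
    Equiv.sum_comp (Equiv.addRight 1) fun i => f (.inl i)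
  have hsigma : ∑ z : Σ i, Fin (K i), f (.inl z.1) = ∑ i, K i * f (.inl i) := by
    rw [Fintype.sum_sigma]
    simp
  simp only [Fintype.sum_sum_type, ownedEdge, edgeSum_mk, Finset.sum_add_distrib, hshift, hsigma,
    add_mul, one_mul]
  ring

theorem card_mul_eq_of_isSEMT (hn : 2 < n) {fv : Fin n ⊕ (Σ i, Fin (K i)) → ℕ}
    {fe : Sym2 (Fin n ⊕ Σ i, Fin (K i)) → ℕ} {C : ℕ} (h : IsSEMT (pendantCycle n K) fv fe C) :
    let M := Fintype.card (Fin n ⊕ Σ i, Fin (K i))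
    M * C = ∑ i ∈ Finset.Icc 1 M, i + ∑ i, (K i + 1) * fv (.inl i) +
      ∑ i ∈ Finset.Icc (M + 1) (M + M), i := by
  intro M
  have hmagic : ∀ x, edgeSum fv (ownedEdge K x) + fe (ownedEdge K x) = C :=
    fun x => h.edgeSum_add (ownedEdge_mem_edgeSet (by omega) x)
  calc M * C = ∑ x, (edgeSum fv (ownedEdge K x) + fe (ownedEdge K x)) := by simp [hmagic, M]
    _ = _ := by
      rw [Finset.sum_add_distrib, sum_edgeSum_ownedEdge, h.sum_vertexLabel,
        h.sum_edgeLabel_comp (ownedEdge_injective hn) (range_ownedEdge (by omega)),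
        ncard_edgeSet hn]

end Graph

section Construction

lemma blocks_add_eq {n k c : ℕ} (hn : n ≠ 0) (hck : c ≤ k) :
    n + (k - c) * n + c * (n - 1) + c = n * (k + 1) := by
  obtain ⟨d, rfl⟩ : ∃ d, k = c + d := ⟨k - c, by omega⟩
  obtain ⟨m, rfl⟩ : ∃ m, n = m + 1 := ⟨n - 1, by omega⟩
  simp only [Nat.add_sub_cancel_left, Nat.add_sub_cancel]
  ring

variable {n k c : ℕ}

abbrev pendants (n k c : ℕ) : Fin n → ℕ := fun i => if i.val = n - 1 then k - c else k

lemma sum_pendants_mul_add (hck : c ≤ k) (w : Fin n → ℕ) {i₀ : Fin n} (hi₀ : i₀.val = n - 1) :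
    ∑ i, pendants n k c i * w i + c * w i₀ = k * ∑ i, w i := by
  have hpt : ∀ i, pendants n k c i * w i + (if i₀ = i then c * w i else 0) = k * w i := by
    intro i
    by_cases h : i₀ = i
    · subst h
      simp [hi₀, ← add_mul, Nat.sub_add_cancel hck]
    · have : i.val ≠ n - 1 := fun h' => h (Fin.ext (hi₀.trans h'.symm))
      simp [h, this]
  rw [Finset.mul_sum, ← Finset.sum_congr rfl fun i _ => hpt i, Finset.sum_add_distrib,
    Finset.sum_ite_eq]
  simp

lemma card_vertices [NeZero n] (hck : c ≤ k) :
    Fintype.card (Fin n ⊕ Σ i, Fin (pendants n k c i)) = n + (k - c) * n + c * (n - 1) := by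
  have hn : n ≠ 0 := NeZero.ne n
  have h := sum_pendants_mul_add hck (fun _ => 1) (i₀ := ⟨n - 1, by omega⟩) rfl
  simp only [mul_one, Finset.sum_const, Finset.card_univ, Fintype.card_fin, smul_eq_mul] at h
  rw [Fintype.card_sum, Fintype.card_fin, Fintype.card_sigma]
  simp only [Fintype.card_fin]
  have := blocks_add_eq hn hck
  linarith

lemma pendant_upper {i : Fin n} {j : Fin (pendants n k c i)} (hj : ¬ j.val < k - c) :
    i.val ≠ n - 1 ∧ j.val < k := by
  have := j.isLt
  simp only [pendants] at this
  split_ifs at this with h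
  · omega
  · exact ⟨h, this⟩

def cycleLabel (n i : ℕ) : ℕ := if i % 2 = 0 then i / 2 + 1 else (n + i) / 2 + 1

lemma cycleLabel_mem (ho : Odd n) {i : ℕ} (hi : i < n) : cycleLabel n i ∈ Set.Icc 1 n := by
  obtain ⟨t, rfl⟩ := ho
  simp only [cycleLabel, Set.mem_Icc]
  split_ifs <;> omega

lemma two_le_cycleLabel {i : ℕ} (hi : 0 < i) (hin : i < n) : 2 ≤ cycleLabel n i := by
  unfold cycleLabel
  split_ifs <;> omega

lemma cycleLabel_injOn (ho : Odd n) {i j : ℕ} (hi : i < n) (hj : j < n)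
    (h : cycleLabel n i = cycleLabel n j) : i = j := by
  obtain ⟨t, rfl⟩ := ho
  unfold cycleLabel at h
  split_ifs at h <;> omega

lemma cycleLabel_add_cycleLabel_succ [NeZero n] (ho : Odd n) (hn : 1 < n) (i : Fin n) :
    cycleLabel n i + cycleLabel n (i + 1).val = (n + 1) / 2 + (i + 1).val + 1 := by
  have hi := i.isLt
  rw [val_add_one_mod hn]
  obtain ⟨t, rfl⟩ := ho
  rcases Nat.lt_or_ge (i.val + 1) (2 * t + 1) with h | h
  · rw [Nat.mod_eq_of_lt h]
    unfold cycleLabel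
    split_ifs <;> omega
  · rw [show i.val + 1 = 2 * t + 1 by omega, Nat.mod_self]
    unfold cycleLabel
    split_ifs <;> omega

-- Labels `1, …, n` go to the cycle (via `ρ`); above them come `k - c` layers of width `n`, holding
-- the `j`-th pendants of all cycle vertices, and then `c` layers of width `n - 1` holding the
-- remaining pendants of the vertices `i ≠ n - 1`. Inside a layer the pendant at `i` sits at
-- position `π i`, shifted down by one in the narrow layers, where `π i ≥ 2`.
variable (n k c) in
def blockLabel (ρ π : Fin n → ℕ) : Fin n ⊕ (Σ i, Fin (pendants n k c i)) → ℕ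
  | .inl i => ρ i
  | .inr ⟨i, j⟩ =>
    if j.val < k - c then n + j.val * n + π i
    else n + (k - c) * n + (j.val - (k - c)) * (n - 1) + (π i - 1)

lemma blockLabel_inr_lower {ρ π : Fin n → ℕ} (hπ_mem : ∀ i, π i ∈ Set.Icc 1 n) {i : Fin n}
    {j : Fin (pendants n k c i)} (hj : j.val < k - c) :
    n + 1 ≤ blockLabel n k c ρ π (.inr ⟨i, j⟩) ∧
      blockLabel n k c ρ π (.inr ⟨i, j⟩) ≤ n + (k - c) * n := by
  have h₁ := hπ_mem i
  have h₂ := add_mul_le_mul h₁.2 hj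
  simp only [blockLabel, if_pos hj, Set.mem_Icc] at h₁ ⊢
  omega

lemma blockLabel_inr_upper {ρ π : Fin n → ℕ} (hπ_mem : ∀ i, π i ∈ Set.Icc 1 n)
    (hπ_two : ∀ i : Fin n, i.val ≠ n - 1 → 2 ≤ π i) {i : Fin n}
    {j : Fin (pendants n k c i)} (hj : ¬ j.val < k - c) :
    n + (k - c) * n + 1 ≤ blockLabel n k c ρ π (.inr ⟨i, j⟩) ∧
      blockLabel n k c ρ π (.inr ⟨i, j⟩) ≤ n + (k - c) * n + c * (n - 1) := by
  obtain ⟨hi, hjk⟩ := pendant_upper hj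
  have h₁ := (hπ_mem i).2
  have h₂ := hπ_two i hi
  have h₃ := add_mul_le_mul (w := n - 1) (u := π i - 1) (by omega)
    (show j.val - (k - c) < c by omega)
  simp only [blockLabel, if_neg hj]
  omega

lemma blockLabel_mem {ρ π : Fin n → ℕ} (hρ_mem : ∀ i, ρ i ∈ Set.Icc 1 n)
    (hπ_mem : ∀ i, π i ∈ Set.Icc 1 n) (hπ_two : ∀ i : Fin n, i.val ≠ n - 1 → 2 ≤ π i)
    (x : Fin n ⊕ Σ i, Fin (pendants n k c i)) :
    blockLabel n k c ρ π x ∈ Set.Icc 1 (n + (k - c) * n + c * (n - 1)) := by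
  rcases x with i | ⟨i, j⟩
  · have := hρ_mem i
    simp only [blockLabel, Set.mem_Icc] at this ⊢
    omega
  · by_cases hj : j.val < k - c
    · have := blockLabel_inr_lower (ρ := ρ) hπ_mem hj
      simp only [Set.mem_Icc]
      omega
    · have := blockLabel_inr_upper (ρ := ρ) hπ_mem hπ_two hj
      simp only [Set.mem_Icc]
      omega

lemma blockLabel_inr_injective {ρ π : Fin n → ℕ} (hπ : Injective π)
    (hπ_mem : ∀ i, π i ∈ Set.Icc 1 n) (hπ_two : ∀ i : Fin n, i.val ≠ n - 1 → 2 ≤ π i)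
    {i i' : Fin n} {j : Fin (pendants n k c i)} {j' : Fin (pendants n k c i')}
    (h : blockLabel n k c ρ π (.inr ⟨i, j⟩) = blockLabel n k c ρ π (.inr ⟨i', j'⟩)) :
    (⟨i, j⟩ : Σ i, Fin (pendants n k c i)) = ⟨i', j'⟩ := by
  have hπi := hπ_mem i
  have hπi' := hπ_mem i'
  simp only [Set.mem_Icc] at hπi hπi'
  by_cases hj : j.val < k - c <;> by_cases hj' : j'.val < k - c
  · simp only [blockLabel, if_pos hj, if_pos hj'] at h
    obtain ⟨hu, hjj⟩ := eq_and_eq_of_add_mul_eq (w := n) (u := π i - 1) (u' := π i' - 1)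
      (j := j.val) (j' := j'.val) (by omega) (by omega) (by omega)
    obtain rfl := hπ (by omega : π i = π i')
    obtain rfl := Fin.ext hjj
    rfl
  · have := blockLabel_inr_lower (ρ := ρ) hπ_mem hj
    have := blockLabel_inr_upper (ρ := ρ) hπ_mem hπ_two hj'
    omega
  · have := blockLabel_inr_upper (ρ := ρ) hπ_mem hπ_two hj
    have := blockLabel_inr_lower (ρ := ρ) hπ_mem hj'
    omega
  · have h₂ := hπ_two i (pendant_upper hj).1
    have h₂' := hπ_two i' (pendant_upper hj').1
    simp only [blockLabel, if_neg hj, if_neg hj'] at h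
    obtain ⟨hu, hjj⟩ := eq_and_eq_of_add_mul_eq (w := n - 1) (u := π i - 2) (u' := π i' - 2)
      (j := j.val - (k - c)) (j' := j'.val - (k - c)) (by omega) (by omega) (by omega)
    obtain rfl := hπ (by omega : π i = π i')
    obtain rfl := Fin.ext (by omega : j.val = j'.val)
    rfl

lemma blockLabel_injective {ρ π : Fin n → ℕ} (hρ : Injective ρ) (hρ_mem : ∀ i, ρ i ∈ Set.Icc 1 n)
    (hπ : Injective π) (hπ_mem : ∀ i, π i ∈ Set.Icc 1 n)
    (hπ_two : ∀ i : Fin n, i.val ≠ n - 1 → 2 ≤ π i) :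
    Injective (blockLabel n k c ρ π) := by
  have hρ_le : ∀ i, ρ i ≤ n := fun i => (hρ_mem i).2
  have hinr : ∀ z : Σ i, Fin (pendants n k c i), n + 1 ≤ blockLabel n k c ρ π (.inr z) := by
    rintro ⟨i, j⟩
    by_cases hj : j.val < k - c
    · exact (blockLabel_inr_lower hπ_mem hj).1
    · have := (blockLabel_inr_upper (ρ := ρ) hπ_mem hπ_two hj).1
      omega
  rintro (i | z) (i' | z') h
  · exact congrArg _ (hρ h)
  · change ρ i = _ at h
    have := hρ_le i
    have := hinr z'
    omega
  · change _ = ρ i' at h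
    have := hρ_le i'
    have := hinr z
    omega
  · exact congrArg _ (blockLabel_inr_injective hπ hπ_mem hπ_two h)

variable [NeZero n]

-- Positioning the pendants of `i` by the label of `i + 1` makes each pendant edge sum equal to the
-- sum of the cycle edge `{i, i + 1}` plus a layer offset, so the edge sums form a block labelling
-- too (`edgeSum_vertexLabel_ownedEdge`).
variable (n k c) in
def vertexLabel : Fin n ⊕ (Σ i, Fin (pendants n k c i)) → ℕ :=
  blockLabel n k c (fun i => cycleLabel n i) (fun i => cycleLabel n (i + 1).val)

lemma edgeSum_vertexLabel_ownedEdge (ho : Odd n) (hn : 1 < n)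
    (x : Fin n ⊕ Σ i, Fin (pendants n k c i)) :
    edgeSum (vertexLabel n k c) (ownedEdge _ x) =
      (n + 1) / 2 + blockLabel n k c (fun i => (i + 1).val + 1) (fun i => (i + 1).val + 1) x := by
  have hcycle := cycleLabel_add_cycleLabel_succ ho hn
  rcases x with i | ⟨i, j⟩
  · simpa [ownedEdge, vertexLabel, blockLabel, add_assoc] using hcycle i
  · have h₁ : 1 ≤ cycleLabel n (i + 1).val := (cycleLabel_mem ho (Fin.isLt _)).1
    have h₂ := hcycle i
    simp only [ownedEdge, edgeSum_mk, vertexLabel, blockLabel]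
    generalize (i + 1).val = b at *
    split_ifs <;> omega

lemma bijOn_vertexLabel (hn : 1 < n) (ho : Odd n) (hck : c ≤ k) :
    Set.BijOn (vertexLabel n k c) Set.univ
      (Set.Icc 1 (Fintype.card (Fin n ⊕ Σ i, Fin (pendants n k c i)))) := by
  have hρ_mem : ∀ i : Fin n, cycleLabel n i ∈ Set.Icc 1 n := fun i => cycleLabel_mem ho i.isLt
  have hπ_mem : ∀ i : Fin n, cycleLabel n (i + 1).val ∈ Set.Icc 1 n :=
    fun i => cycleLabel_mem ho (Fin.isLt _)
  have hπ_two : ∀ i : Fin n, i.val ≠ n - 1 → 2 ≤ cycleLabel n (i + 1).val :=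
    fun i hi => two_le_cycleLabel (pos_val_add_one hn hi) (Fin.isLt _)
  have hπ : Injective fun i : Fin n => cycleLabel n (i + 1).val := fun i j h =>
    add_left_injective 1 (Fin.ext (cycleLabel_injOn ho (Fin.isLt _) (Fin.isLt _) h))
  refine bijOn_Icc_of_injective
    (blockLabel_injective (fun i j h => Fin.ext (cycleLabel_injOn ho i.isLt j.isLt h))
      hρ_mem hπ hπ_mem hπ_two)
    (fun x => card_vertices (n := n) hck ▸ blockLabel_mem hρ_mem hπ_mem hπ_two x) (by omega)

lemma bijOn_edgeSum_vertexLabel (hn : 2 < n) (ho : Odd n) (hck : c ≤ k) :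
    Set.BijOn (edgeSum (vertexLabel n k c)) (pendantCycle n (pendants n k c)).edgeSet
      (Set.Icc ((n + 1) / 2 + 1)
        ((n + 1) / 2 + (pendantCycle n (pendants n k c)).edgeSet.ncard)) := by
  rw [ncard_edgeSet hn, ← range_ownedEdge (by omega), ← Set.image_univ,
    ← Set.bijOn_comp_iff (ownedEdge_injective hn).injOn, comp_def]
  simp only [edgeSum_vertexLabel_ownedEdge ho (by omega : 1 < n)]
  have hτ_mem : ∀ i : Fin n, (i + 1).val + 1 ∈ Set.Icc 1 n :=
    fun i => ⟨Nat.le_add_left _ _, Fin.isLt _⟩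
  have hτ_two : ∀ i : Fin n, i.val ≠ n - 1 → 2 ≤ (i + 1).val + 1 :=
    fun i hi => Nat.succ_le_succ (pos_val_add_one (by omega) hi)
  have hτ : Injective fun i : Fin n => (i + 1).val + 1 :=
    fun i j h => add_left_injective 1 (Fin.ext (Nat.succ_injective h))
  refine bijOn_Icc_of_injective
    ((add_right_injective _).comp (blockLabel_injective hτ hτ_mem hτ hτ_mem hτ_two))
    (fun x => ?_) (by omega)
  have := card_vertices (n := n) hck ▸ blockLabel_mem hτ_mem hτ_mem hτ_two x
  simp only [Set.mem_Icc] at this ⊢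
  omega

theorem exists_isSEMT_vertexLabel (hn : 3 ≤ n) (ho : Odd n) (hck : c ≤ k) :
    ∃ fe, IsSEMT (pendantCycle n (pendants n k c)) (vertexLabel n k c) fe
      (2 * Fintype.card (Fin n ⊕ Σ i, Fin (pendants n k c i)) + (n + 3) / 2) := by
  have h := isSEMT_of_bijOn_edgeSum (bijOn_vertexLabel (by omega) ho hck)
    (bijOn_edgeSum_vertexLabel (by omega) ho hck)
  rw [ncard_edgeSet (by omega), show ∀ M, M + M + (n + 1) / 2 + 1 = 2 * M + (n + 3) / 2 from
    fun M => by omega] at h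
  exact ⟨_, h⟩

end Construction

section LowerBound

lemma le_of_double_count {n k c t M C X y E W T₁ T₂ : ℕ} (hn : n = 2 * t + 1)
    (hM : M + c = n * (k + 1)) (hck : c ≤ k) (hX : n * (n + 1) ≤ 2 * X)
    (hE : (n - 1) * n ≤ 2 * E) (hEy : E + y = X) (hW : W + c * y = (k + 1) * X)
    (hT₁ : 2 * T₁ = M * (M + 1)) (hT₂ : 2 * T₂ = M * (2 * M + M + 1))
    (hsum : M * C = T₁ + W + T₂) : 2 * M + (n + 3) / 2 ≤ C := by
  subst hn
  obtain ⟨d, rfl⟩ : ∃ d, k = c + d := ⟨k - c, by omega⟩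
  simp only [Nat.add_sub_cancel] at hE
  rw [show (2 * t + 1 + 3) / 2 = t + 2 by omega]
  by_contra! hC
  have : M * C ≤ M * (2 * M + t + 1) := Nat.mul_le_mul_left M (by omega)
  nlinarith

variable {n k c : ℕ} [NeZero n]

theorem le_of_isSEMT (hn : 3 ≤ n) (ho : Odd n) (hck : c ≤ k)
    {fv : Fin n ⊕ (Σ i, Fin (pendants n k c i)) → ℕ} {fe : Sym2 _ → ℕ} {C : ℕ}
    (h : IsSEMT (pendantCycle n (pendants n k c)) fv fe C) :
    2 * Fintype.card (Fin n ⊕ Σ i, Fin (pendants n k c i)) + (n + 3) / 2 ≤ C := by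
  have hMc := card_vertices (n := n) hck ▸ blocks_add_eq (NeZero.ne n) hck
  set M := Fintype.card (Fin n ⊕ Σ i, Fin (pendants n k c i))
  have hT₁ := two_mul_sum_Icc 0 M
  simp only [zero_add, mul_zero] at hT₁
  let i₀ : Fin n := ⟨n - 1, by omega⟩
  have hdouble := card_mul_eq_of_isSEMT (by omega) h
  have hweights : ∑ i, (pendants n k c i + 1) * fv (.inl i) + c * fv (.inl i₀) =
      (k + 1) * ∑ i, fv (.inl i) := by
    have := sum_pendants_mul_add hck (fun i => fv (.inl i)) (i₀ := i₀) rfl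
    simp only [add_mul, one_mul, Finset.sum_add_distrib]
    linarith
  have hX := h.card_mul_le_two_mul_sum Sum.inl_injective Finset.univ
  have hE := h.card_mul_le_two_mul_sum Sum.inl_injective (Finset.univ.erase i₀)
  rw [Finset.card_univ, Fintype.card_fin] at hX
  rw [Finset.card_erase_of_mem (Finset.mem_univ _), Finset.card_univ, Fintype.card_fin,
    Nat.sub_add_cancel (by omega)] at hE
  obtain ⟨t, ht⟩ := ho
  exact le_of_double_count ht hMc hck hX hE (Finset.sum_erase_add _ _ (Finset.mem_univ i₀))
    hweights hT₁ (two_mul_sum_Icc M M) hdouble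

end LowerBound

end PendantCycle

open PendantCycle

theorem stmt_10_general (n k c : ℕ) (hn : 3 ≤ n) (ho : Odd n) (hck : c ≤ k) :
    (∃ fv fe cf,
        IsSEMT (pendantCycle n (fun i => if i.val = n - 1 then k - c else k)) fv fe cf) ∧
    sInf {cf | ∃ fv fe,
        IsSEMT (pendantCycle n (fun i => if i.val = n - 1 then k - c else k)) fv fe cf} =
      2 * n * (k + 1) - 2 * c + (n + 3) / 2 := by
  have : NeZero n := ⟨by omega⟩
  have hvalue : 2 * n * (k + 1) - 2 * c + (n + 3) / 2 =
      2 * Fintype.card (Fin n ⊕ Σ i, Fin (pendants n k c i)) + (n + 3) / 2 := by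
    have := blocks_add_eq (NeZero.ne n) hck
    rw [card_vertices hck, mul_assoc]
    omega
  have hleast : IsLeast {cf | ∃ fv fe, IsSEMT (pendantCycle n (pendants n k c)) fv fe cf}
      (2 * n * (k + 1) - 2 * c + (n + 3) / 2) := by
    rw [hvalue]
    exact ⟨⟨_, exists_isSEMT_vertexLabel hn ho hck⟩, fun C ⟨_, _, h⟩ => le_of_isSEMT hn ho hck h⟩
  obtain ⟨fv, fe, h⟩ := hleast.1
  exact ⟨⟨fv, fe, _, h⟩, hleast.csInf_eq⟩

/-- `G_{n,k,-c}`: odd cycle `a₁,…,aₙ` with `k` pendants at `a₁,…,a_{n-1}` and `k−c` pendants at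
`aₙ`, where `1 ≤ c ≤ k`. It is super edge-magic total with strength `2n(k+1) − 2c + (n+3)/2`. -/
theorem stmt_10 (n k c : ℕ) (hn : 3 ≤ n) (ho : Odd n) (hk : 1 ≤ k) (hc : 1 ≤ c) (hck : c ≤ k) :
    (∃ fv fe cf,
        IsSEMT (pendantCycle n (fun i => if i.val = n - 1 then k - c else k)) fv fe cf) ∧
    sInf {cf | ∃ fv fe,
        IsSEMT (pendantCycle n (fun i => if i.val = n - 1 then k - c else k)) fv fe cf} =
      2 * n * (k + 1) - 2 * c + (n + 3) / 2 :=
  stmt_10_general n k c hn ho hck
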